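/- arXiv:1711.05508 — 6 statements merged into one kernel-verified Lean document; each statement's English description precedes it below -/
import Mathlib

section
/- Let ⟨K,B,P,N⟩_R be a DPI. Then for every D ⊆ K: D is a minimal diagnosis w.r.t. the DPI if and only if D is a minimal hitting set of the collection of all minimal conflicts w.r.t. the DPI. -/
/-!
`D ⊆ K` is a diagnosis iff `K \ D` is not a conflict, i.e. iff `D` meets every conflict.
Because the positive test cases are added to every candidate KB, being a conflict only
depends on violating a requirement or entailing a negative test case, which is monotone;
so conflicts are upward closed in `K`, and since `K` is finite each contains a minimal one.
Hence the diagnoses are exactly the subsets of `K` hitting every minimal conflict, and the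
minimal ones among them are the minimal hitting sets.
-/

namespace KBDDiag

/-- A diagnosis problem instance (DPI) `⟨K,B,P,N⟩_R` over a Tarskian logic on sentences `L`. -/
structure DPI (L : Type*) where
  /-- the entailment relation of the logic -/
  entails : Set L → L → Prop
  /-- entailment is monotonic -/
  entails_mono : ∀ (X Y : Set L) (α : L), entails X α → entails (X ∪ Y) α
  /-- entailment is idempotent -/
  entails_idem : ∀ (X A : Set L) (β : L),
    (∀ α ∈ A, entails X α) → entails (X ∪ A) β → entails X β
  /-- entailment is extensive -/
  entails_ext : ∀ (X : Set L) (α : L), α ∈ X → entails X α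
  /-- the (possibly faulty) KB -/
  K : Set L
  /-- the background KB -/
  B : Set L
  /-- the positive test cases -/
  P : Set (Set L)
  /-- the negative test cases -/
  N : Set (Set L)
  /-- requirements: `r X` means the KB `X` satisfies requirement `r` -/
  R : Set (Set L → Prop)
  K_finite : K.Finite
  B_finite : B.Finite
  K_B_disjoint : K ∩ B = ∅
  P_finite : P.Finite
  P_mem_finite : ∀ p ∈ P, Set.Finite p
  N_finite : N.Finite
  N_mem_finite : ∀ n ∈ N, Set.Finite n
  /-- violation of a requirement is monotone -/
  viol_mono : ∀ r ∈ R, ∀ X Y : Set L, X ⊆ Y → ¬ r X → ¬ r Y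
  /-- requirements are preserved under adding entailed sentences -/
  sat_entailed : ∀ r ∈ R, ∀ X A : Set L, r X → (∀ α ∈ A, entails X α) → r (X ∪ A)
  /-- the background KB satisfies every requirement -/
  B_sat : ∀ r ∈ R, r B

namespace DPI

variable {L : Type*} (d : DPI L)

/-- `X ⊨ Y` : X entails every sentence of Y. -/
def EntailsAll (X Y : Set L) : Prop := ∀ α ∈ Y, d.entails X α

/-- `U_P`, the union of all positive test cases. -/
def UP : Set L := ⋃₀ d.P

/-- `Ks` is a solution KB w.r.t. the DPI. -/
def IsSolutionKB (Ks : Set L) : Prop :=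
  (∀ r ∈ d.R, r (Ks ∪ d.B)) ∧
  (∀ p ∈ d.P, d.EntailsAll (Ks ∪ d.B) p) ∧
  (∀ n ∈ d.N, ¬ d.EntailsAll (Ks ∪ d.B) n)

/-- `D` is a diagnosis w.r.t. the DPI. -/
def IsDiagnosis (D : Set L) : Prop :=
  D ⊆ d.K ∧ d.IsSolutionKB ((d.K \ D) ∪ d.UP)

/-- `D` is a minimal diagnosis w.r.t. the DPI. -/
def IsMinDiagnosis (D : Set L) : Prop :=
  d.IsDiagnosis D ∧ ∀ D' ⊂ D, ¬ d.IsDiagnosis D'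

/-- `C` is a conflict w.r.t. the DPI. -/
def IsConflict (C : Set L) : Prop :=
  C ⊆ d.K ∧ ¬ d.IsSolutionKB (C ∪ d.UP)

/-- `C` is a minimal conflict w.r.t. the DPI. -/
def IsMinConflict (C : Set L) : Prop :=
  d.IsConflict C ∧ ∀ C' ⊂ C, ¬ d.IsConflict C'

/-- `Ks` is a maximal solution KB w.r.t. the DPI. -/
def IsMaxSolutionKB (Ks : Set L) : Prop :=
  d.IsSolutionKB Ks ∧ ¬ ∃ K' : Set L, d.IsSolutionKB K' ∧ Ks ∩ d.K ⊂ K' ∩ d.K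

/-- `K*_i = (K \ D_i) ∪ B ∪ U_P`. -/
def Kstar (Di : Set L) : Set L := (d.K \ Di) ∪ d.B ∪ d.UP

/-- `X` violates some requirement in `R` or entails some negative test case. -/
def Violates (X : Set L) : Prop :=
  (∃ r ∈ d.R, ¬ r X) ∨ (∃ n ∈ d.N, d.EntailsAll X n)

/-- `dx(X)` w.r.t. the leading diagnoses `Ds`. -/
def dxS (Ds : Set (Set L)) (X : Set L) : Set (Set L) :=
  {Di ∈ Ds | d.EntailsAll (d.Kstar Di) X}

/-- `dnx(X)` w.r.t. the leading diagnoses `Ds`. -/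
def dnxS (Ds : Set (Set L)) (X : Set L) : Set (Set L) :=
  {Di ∈ Ds | d.Violates (d.Kstar Di ∪ X)}

/-- `dz(X)` w.r.t. the leading diagnoses `Ds`. -/
def dzS (Ds : Set (Set L)) (X : Set L) : Set (Set L) :=
  Ds \ (d.dxS Ds X ∪ d.dnxS Ds X)

/-- `Q` is a query w.r.t. the leading diagnoses `Ds`. -/
def IsQuery (Ds : Set (Set L)) (Q : Set L) : Prop :=
  Q.Nonempty ∧ (d.dxS Ds Q).Nonempty ∧ (d.dnxS Ds Q).Nonempty

/-- The canonical query `Q_can(S) = (K \ U_S) ∩ (U_D \ I_D)` w.r.t. the seed `S`. -/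
def Qcan (Ds S : Set (Set L)) : Set L := (d.K \ ⋃₀ S) ∩ (⋃₀ Ds \ ⋂₀ Ds)

/-- `⟨dxp, dnxp, ∅⟩` is a canonical q-partition of `Ds`. -/
def IsCanonicalQPartition (Ds dxp dnxp : Set (Set L)) : Prop :=
  dxp ∪ dnxp = Ds ∧ dxp ∩ dnxp = ∅ ∧
  dxp.Nonempty ∧ dxp ⊂ Ds ∧
  (d.Qcan Ds dxp).Nonempty ∧
  d.dxS Ds (d.Qcan Ds dxp) = dxp ∧
  d.dnxS Ds (d.Qcan Ds dxp) = dnxp ∧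
  d.dzS Ds (d.Qcan Ds dxp) = ∅

end DPI

/-- `Disc_D = U_D \ I_D`, the discrimination sentences w.r.t. `Ds`. -/
def Disc {L : Type*} (Ds : Set (Set L)) : Set L := ⋃₀ Ds \ ⋂₀ Ds

/-- `H` is a hitting set of the collection `S`. -/
def IsHittingSet {α : Type*} (S : Set (Set α)) (H : Set α) : Prop :=
  H ⊆ ⋃₀ S ∧ ∀ s ∈ S, (H ∩ s).Nonempty

/-- `H` is a minimal hitting set of the collection `S`. -/
def IsMinHittingSet {α : Type*} (S : Set (Set α)) (H : Set α) : Prop :=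
  IsHittingSet S H ∧ ∀ H' ⊂ H, ¬ IsHittingSet S H'

/-- `MHS S`, the set of all minimal hitting sets of `S`. -/
def MHS {α : Type*} (S : Set (Set α)) : Set (Set α) :=
  {H | IsMinHittingSet S H}


section HittingSet

variable {α : Type*} {S : Set (Set α)} {p : Set α → Prop} {U : Set α}

theorem isMinHittingSet_iff_of_forall_iff (hSU : ⋃₀ S ⊆ U)
    (hp : ∀ X, p X ↔ X ⊆ U ∧ ∀ s ∈ S, (X ∩ s).Nonempty) {D : Set α} :
    (p D ∧ ∀ D' ⊂ D, ¬ p D') ↔ IsMinHittingSet S D := by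
  have of_hittingSet {X : Set α} (hX : IsHittingSet S X) : p X :=
    (hp X).2 ⟨hX.1.trans hSU, hX.2⟩
  constructor
  · rintro ⟨hD, hmin⟩
    have hits := ((hp D).1 hD).2
    -- `D ∩ ⋃₀ S` still hits every member of `S`, so minimality rules out a proper shrinking.
    have hD_sub : D ⊆ ⋃₀ S := by
      by_contra hnot
      refine hmin (D ∩ ⋃₀ S) (Set.inter_subset_left.ssubset_of_not_superset
        fun h => hnot (h.trans Set.inter_subset_right)) (of_hittingSet ⟨Set.inter_subset_right, ?_⟩)
      intro s hs
      obtain ⟨x, hxD, hxs⟩ := hits s hs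
      exact ⟨x, ⟨hxD, s, hs, hxs⟩, hxs⟩
    exact ⟨⟨hD_sub, hits⟩, fun D' hD' hD'_hits => hmin D' hD' (of_hittingSet hD'_hits)⟩
  · rintro ⟨hD, hmin⟩
    exact ⟨of_hittingSet hD, fun D' hD' hpD' =>
      hmin D' hD' ⟨hD'.subset.trans hD.1, ((hp D').1 hpD').2⟩⟩

end HittingSet

namespace DPI

variable {L : Type*} {d : DPI L}

theorem entails_of_subset {X Y : Set L} {α : L} (h : X ⊆ Y) (hX : d.entails X α) :
    d.entails Y α := by
  simpa [Set.union_eq_self_of_subset_left h] using d.entails_mono X Y α hX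

theorem Violates.mono {X Y : Set L} (h : X ⊆ Y) (hX : d.Violates X) : d.Violates Y := by
  rcases hX with ⟨r, hr, hrX⟩ | ⟨n, hn, hnX⟩
  · exact Or.inl ⟨r, hr, d.viol_mono r hr X Y h hrX⟩
  · exact Or.inr ⟨n, hn, fun α hα => entails_of_subset h (hnX α hα)⟩

theorem not_isSolutionKB_union_UP_iff (X : Set L) :
    ¬ d.IsSolutionKB (X ∪ d.UP) ↔ d.Violates (X ∪ d.UP ∪ d.B) := by
  have entails_P : ∀ p ∈ d.P, d.EntailsAll (X ∪ d.UP ∪ d.B) p :=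
    fun p hp α hα => d.entails_ext _ α (Or.inl (Or.inr ⟨p, hp, hα⟩))
  simp only [IsSolutionKB, Violates, eq_true entails_P, true_and, not_and_or, not_forall, not_not,
    exists_prop]

theorem IsConflict.mono {C C' : Set L} (hC : d.IsConflict C) (h : C ⊆ C') (hK : C' ⊆ d.K) :
    d.IsConflict C' :=
  ⟨hK, (not_isSolutionKB_union_UP_iff C').2 <|
    ((not_isSolutionKB_union_UP_iff C).1 hC.2).mono (by gcongr)⟩

theorem IsConflict.exists_isMinConflict_subset {C : Set L} (hC : d.IsConflict C) :
    ∃ M ⊆ C, d.IsMinConflict M := by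
  have hfin : {C : Set L | d.IsConflict C}.Finite :=
    d.K_finite.finite_subsets.subset fun _ hC => hC.1
  obtain ⟨M, hMC, hM⟩ := hfin.exists_le_minimal hC
  exact ⟨M, hMC, minimal_iff_forall_lt.1 hM⟩

theorem isDiagnosis_iff_not_isConflict_diff {D : Set L} :
    d.IsDiagnosis D ↔ D ⊆ d.K ∧ ¬ d.IsConflict (d.K \ D) := by
  simp only [IsDiagnosis, IsConflict, Set.sdiff_subset, true_and, not_not]

theorem not_isConflict_diff_iff {D : Set L} :
    ¬ d.IsConflict (d.K \ D) ↔ ∀ C, d.IsMinConflict C → (D ∩ C).Nonempty := by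
  constructor
  · intro hD C hC
    by_contra hDC
    exact hD (hC.1.mono (fun x hx => ⟨hC.1.1 hx, fun hxD => hDC ⟨x, hxD, hx⟩⟩) Set.sdiff_subset)
  · intro hD hconf
    obtain ⟨M, hM_sub, hM⟩ := hconf.exists_isMinConflict_subset
    obtain ⟨x, hxD, hxM⟩ := hD M hM
    exact (hM_sub hxM).2 hxD

theorem isDiagnosis_iff {D : Set L} :
    d.IsDiagnosis D ↔ D ⊆ d.K ∧ ∀ C, d.IsMinConflict C → (D ∩ C).Nonempty := by
  rw [isDiagnosis_iff_not_isConflict_diff, not_isConflict_diff_iff]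

end DPI

theorem statement1_general {L : Type*} (d : DPI L) (D : Set L) :
    d.IsMinDiagnosis D ↔ IsMinHittingSet {C : Set L | d.IsMinConflict C} D :=
  isMinHittingSet_iff_of_forall_iff (fun _ ⟨_, hC, hx⟩ => hC.1.1 hx) fun _ => DPI.isDiagnosis_iff

/-- `D` is a minimal diagnosis iff `D` is a minimal hitting set of the
collection of all minimal conflicts. -/
theorem statement1 {L : Type*} (d : DPI L) (D : Set L) (hD : D ⊆ d.K) :
    d.IsMinDiagnosis D ↔ IsMinHittingSet {C : Set L | d.IsMinConflict C} D :=
  statement1_general d D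

end KBDDiag
end

section
/- (Reduction of MBD to KBD.) Assume the relation symbol ab does not occur in any of the sentences beh(c_1),…,beh(c_n), nor in any sentence of SD_gen, OBS or U_MEAS; assume the sentences beh(c_1),…,beh(c_n) are pairwise distinct, the constant symbols c_1,…,c_n are pairwise distinct, and SD_gen ∪ OBS ∪ U_MEAS semantically entails c_i ≠ c_j for all i ≠ j. Define the KBD-DPI ⟨K,B,P,N⟩_R by K := {beh(c_i) : i = 1,…,n}, B := OBS ∪ SD_gen, P := MEAS, N := ∅ and R := {consistency}. Then for every index set I ⊆ {1,…,n}: the set D := {beh(c_i) : i ∈ I} is a KBD-diagnosis w.r.t. ⟨K,B,P,N⟩_R (i.e., {beh(c_j) : j ∉ I} ∪ OBS ∪ SD_gen ∪ U_MEAS is consistent) if and only if Δ := {c_i : i ∈ I} is an MBD-diagnosis for (SD, COMPS, OBS, MEAS). Consequently, D ↦ {c_i : beh(c_i) ∈ D} is a bijective correspondence between the KBD-diagnoses w.r.t. ⟨K,B,P,N⟩_R and the MBD-diagnoses for (SD, COMPS, OBS, MEAS). -/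
/-!
A model of `SD ∪ {ab(c i) : i ∈ I} ∪ {¬ab(c j) : j ∉ I} ∪ OBS ∪ U_MEAS` satisfies `¬ab(c j)`, hence
`beh j`, for every `j ∉ I`, so it is a model of the KBD theory. Conversely, a model of the
`ab`-free KBD theory becomes a model of the MBD theory once `ab` is interpreted as
`{c i : i ∈ I}`; the constants `c i` name distinct elements in every model, so `¬ab(c j)` holds
for `j ∉ I`. Both kinds of diagnosis are then determined by the index set `I` (the maps `beh`,
`c` and the embedding of `ab`-free sentences being injective), which gives the bijection.
-/

namespace MBDReduction

open FirstOrder FirstOrder.Language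

/-- The language consisting of a single unary relation symbol `ab` (and nothing else). -/
def abLang : FirstOrder.Language where
  Functions := fun _ => Empty
  Relations := fun n => match n with
    | 1 => Unit
    | _ => Empty

variable (L₀ : FirstOrder.Language)

/-- The extension of the base language `L₀` (in which `ab` does not occur) by the
relation symbol `ab`. -/
def LL : FirstOrder.Language := L₀.sum abLang

/-- The relation symbol `ab`. -/
def ab : (LL L₀).Relations 1 := Sum.inr Unit.unit

/-- Lifting of `L₀`-sentences (which hence do not contain `ab`) to the extended language. -/
def lift : L₀.Sentence → (LL L₀).Sentence := (LHom.sumInl (L' := abLang)).onSentence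

/-- The constant symbol `t` of `L₀` viewed as a term of the extended language. -/
def constT (t : L₀.Constants) : (LL L₀).Term Empty :=
  Constants.term (Sum.inl t)

/-- The sentence `ab(t)` for a constant symbol `t` of `L₀`. -/
def abOf (t : L₀.Constants) : (LL L₀).Sentence :=
  Relations.formula₁ (ab L₀) (constT L₀ t)

theorem _root_.FirstOrder.Language.LHom.Injective.onTerm_injective {L L' : Language}
    {ϕ : L →ᴸ L'} (hϕ : ϕ.Injective) {α : Type*} :
    Function.Injective (ϕ.onTerm : L.Term α → L'.Term α) := by
  intro t
  induction t with
  | var a => rintro (_ | _) h <;> simp_all only [LHom.onTerm, Term.var.injEq, reduceCtorEq]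
  | func f ts ih =>
    rintro (_ | ⟨g, us⟩) h
    · cases h
    · simp only [LHom.onTerm, Term.func.injEq] at h
      obtain ⟨rfl, hfg, hts⟩ := h
      rw [hϕ.onFunction (eq_of_heq hfg), funext fun i => ih i (congrFun (eq_of_heq hts) i)]

theorem _root_.FirstOrder.Language.LHom.Injective.onBoundedFormula_injective {L L' : Language}
    {ϕ : L →ᴸ L'} (hϕ : ϕ.Injective) {α : Type*} {k : ℕ} :
    Function.Injective (ϕ.onBoundedFormula : L.BoundedFormula α k → L'.BoundedFormula α k) := by
  intro φ
  induction φ with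
  | falsum => rintro (_ | _ | _ | _ | _) ⟨⟩; rfl
  | equal t₁ t₂ =>
    rintro (_ | ⟨u₁, u₂⟩ | _ | _ | _) h <;>
      simp only [LHom.onBoundedFormula, Term.bdEqual, Relations.boundedFormula,
        BoundedFormula.equal.injEq, reduceCtorEq] at h
    rw [hϕ.onTerm_injective h.1, hϕ.onTerm_injective h.2]
  | rel R ts =>
    rintro (_ | _ | ⟨S, us⟩ | _ | _) h <;>
      simp only [LHom.onBoundedFormula, Term.bdEqual, Relations.boundedFormula,
        BoundedFormula.rel.injEq, reduceCtorEq] at h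
    obtain ⟨rfl, hRS, hts⟩ := h
    rw [hϕ.onRelation (eq_of_heq hRS),
      funext fun i => hϕ.onTerm_injective (congrFun (eq_of_heq hts) i)]
  | imp φ₁ φ₂ ih₁ ih₂ =>
    rintro (_ | _ | _ | ⟨ψ₁, ψ₂⟩ | _) h <;>
      simp only [LHom.onBoundedFormula, Term.bdEqual, Relations.boundedFormula,
        BoundedFormula.imp.injEq, reduceCtorEq] at h
    rw [ih₁ h.1, ih₂ h.2]
  | all φ ih =>
    rintro (_ | _ | _ | _ | ψ) h <;>
      simp only [LHom.onBoundedFormula, Term.bdEqual, Relations.boundedFormula,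
        BoundedFormula.all.injEq, reduceCtorEq] at h
    rw [ih h]

theorem _root_.Set.bijOn_image_preimage {ι X Y : Type*} {g : ι → X} {h : ι → Y}
    (hg : Function.Injective g) (hh : Function.Injective h) (Q : Set ι → Prop) :
    Set.BijOn (fun D => h '' (g ⁻¹' D)) {D | D ⊆ Set.range g ∧ Q (g ⁻¹' D)}
      {Δ | Δ ⊆ Set.range h ∧ Q (h ⁻¹' Δ)} := by
  refine ⟨?_, ?_, ?_⟩
  · rintro D ⟨-, hQ⟩
    exact ⟨Set.image_subset_range h _, by rwa [Set.preimage_image_eq _ hh]⟩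
  · rintro D₁ ⟨hD₁, -⟩ D₂ ⟨hD₂, -⟩ hD
    rw [← Set.image_preimage_eq_of_subset hD₁, ← Set.image_preimage_eq_of_subset hD₂,
      Set.image_injective.2 hh hD]
  · rintro Δ ⟨hΔ, hQ⟩
    refine ⟨g '' (h ⁻¹' Δ), ⟨Set.image_subset_range g _, ?_⟩, ?_⟩
    · rwa [Set.preimage_image_eq _ hg]
    · simp only [Set.preimage_image_eq _ hg, Set.image_preimage_eq_of_subset hΔ]

theorem lift_injective {L : Language} : Function.Injective (lift L) :=
  LHom.sumInl_injective.onBoundedFormula_injective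

abbrev abStructure {M : Type*} (p : M → Prop) : abLang.Structure M where
  funMap := fun {_} f _ => f.elim
  RelMap := fun {k} R => match k, R with
    | 1, _ => fun xs => p (xs 0)
    | 0, r => r.elim
    | _+2, r => r.elim

universe u v

section Reduction

variable {L : FirstOrder.Language.{u, v}} {ι : Type*} (c : ι → L.Constants) (beh : ι → L.Sentence)

/-- `SD_beh`. -/
def sdBeh : (LL L).Theory :=
  Set.range fun i => ((abOf L (c i)).not).imp (lift L (beh i))

/-- `{ab(c) : c ∈ Δ} ∪ {¬ab(c) : c ∈ COMPS \ Δ}` for `Δ = c '' I`. -/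
def abLiterals (I : Set ι) : (LL L).Theory :=
  (fun i => abOf L (c i)) '' I ∪ (fun i => (abOf L (c i)).not) '' Iᶜ

variable {c beh}

theorem model_sdBeh_iff {M : Type*} [(LL L).Structure M] :
    M ⊨ sdBeh c beh ↔ ∀ i, ¬ M ⊨ abOf L (c i) → M ⊨ lift L (beh i) := by
  simp only [sdBeh, Theory.model_iff, Set.forall_mem_range, Sentence.realize_imp,
    Sentence.realize_not]

theorem model_abLiterals_iff {M : Type*} [(LL L).Structure M] {I : Set ι} :
    M ⊨ abLiterals c I ↔ ∀ i, (M ⊨ abOf L (c i) ↔ i ∈ I) := by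
  rw [abLiterals, Theory.model_union_iff]
  simp only [Theory.model_iff, Set.forall_mem_image, Sentence.realize_not, Set.mem_compl_iff]
  exact ⟨fun h i => ⟨fun hi => by_contra fun hI => h.2 hI hi, fun hI => h.1 hI⟩,
    fun h => ⟨fun i => (h i).2, fun i hI hi => hI ((h i).1 hi)⟩⟩

variable {T : L.Theory} {I : Set ι}

theorem constantMap_injective_of_models
    (hdist : ∀ i j : ι, i ≠ j → Theory.ModelsBoundedFormula T
      ((Term.equal (Constants.term (c i)) (Constants.term (c j)) : L.Formula Empty).not))
    (M : Theory.ModelType.{u, v, max u v} T) :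
    Function.Injective fun i => (constantMap (c i) : M) := by
  intro i j hij
  by_contra hne
  have := hdist i j hne M default default
  rw [BoundedFormula.realize_not] at this
  exact this (Formula.realize_equal.2 (by simpa only [Term.realize_constants] using hij))

theorem isSatisfiable_sdBeh_union_of_model {N : Type*} [Nonempty N] [L.Structure N]
    (hc : Function.Injective fun i => (constantMap (c i) : N)) (hN : N ⊨ beh '' Iᶜ ∪ T) :
    Theory.IsSatisfiable (sdBeh c beh ∪ abLiterals c I ∪ lift L '' T) := by
  let : abLang.Structure N := abStructure (· ∈ (fun i => (constantMap (c i) : N)) '' I)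
  let : (LL L).Structure N := Language.sumStructure L abLang N
  have hlift : ∀ φ : L.Sentence, N ⊨ lift L φ ↔ N ⊨ φ :=
    LHom.realize_onSentence (L' := L.sum abLang) (M := N) LHom.sumInl
  have hliftT : ∀ S : L.Theory, N ⊨ lift L '' S ↔ N ⊨ S :=
    LHom.onTheory_model (L' := L.sum abLang) (M := N) LHom.sumInl
  have hconst : ∀ t, (constT L t).realize (default : Empty → N) = constantMap t :=
    fun _ => Term.realize_constants
  have hab : ∀ i, N ⊨ abOf L (c i) ↔ i ∈ I := fun i => by
    rw [abOf, Sentence.Realize, Formula.realize_rel₁, hconst]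
    exact hc.mem_set_image
  rw [Theory.model_union_iff, Theory.model_iff] at hN
  have : N ⊨ sdBeh c beh ∪ abLiterals c I ∪ lift L '' T := by
    rw [Theory.model_union_iff, Theory.model_union_iff, model_sdBeh_iff, model_abLiterals_iff,
      hliftT]
    exact ⟨⟨fun i hi => (hlift _).2 (hN.1 _ ⟨i, (hab i).not.1 hi, rfl⟩), hab⟩, hN.2⟩
  exact Theory.Model.isSatisfiable N

theorem model_lift_of_model_sdBeh_union {M : Type*} [(LL L).Structure M]
    (h : M ⊨ sdBeh c beh ∪ abLiterals c I ∪ lift L '' T) : M ⊨ lift L '' (beh '' Iᶜ ∪ T) := by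
  simp only [Theory.model_union_iff, model_sdBeh_iff, model_abLiterals_iff] at h
  rw [Set.image_union, Theory.model_union_iff, Set.image_image, Theory.model_iff]
  exact ⟨Set.forall_mem_image.2 fun i hi => h.1.1 i fun hab => hi ((h.1.2 i).1 hab), h.2⟩

theorem isSatisfiable_lift_iff_sdBeh_union
    (hdist : ∀ i j : ι, i ≠ j → Theory.ModelsBoundedFormula T
      ((Term.equal (Constants.term (c i)) (Constants.term (c j)) : L.Formula Empty).not))
    (I : Set ι) :
    Theory.IsSatisfiable (lift L '' (beh '' Iᶜ ∪ T)) ↔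
      Theory.IsSatisfiable (sdBeh c beh ∪ abLiterals c I ∪ lift L '' T) := by
  constructor
  · rintro ⟨M⟩
    let N := Theory.ModelType.reduct LHom.sumInl M
    exact isSatisfiable_sdBeh_union_of_model
      (constantMap_injective_of_models hdist (N.subtheoryModel Set.subset_union_right)) N.is_model
  · rintro ⟨M⟩
    have := model_lift_of_model_sdBeh_union M.is_model
    exact Theory.Model.isSatisfiable M

variable {SDgen OBS : Set L.Sentence} {MEAS : Set (Set L.Sentence)}

theorem isSatisfiable_kbd_iff_mbd
    (hdist : ∀ i j : ι, i ≠ j → Theory.ModelsBoundedFormula (SDgen ∪ OBS ∪ ⋃₀ MEAS)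
      ((Term.equal (Constants.term (c i)) (Constants.term (c j)) : L.Formula Empty).not))
    (I : Set ι) :
    Theory.IsSatisfiable
        (lift L '' (beh '' Iᶜ) ∪ lift L '' OBS ∪ lift L '' SDgen ∪ lift L '' ⋃₀ MEAS) ↔
      Theory.IsSatisfiable
        ((Set.range fun i => ((abOf L (c i)).not).imp (lift L (beh i))) ∪ lift L '' SDgen ∪
          ((fun i => abOf L (c i)) '' I) ∪ ((fun i => (abOf L (c i)).not) '' Iᶜ) ∪
          lift L '' OBS ∪ lift L '' ⋃₀ MEAS) := by
  have hkbd : lift L '' (beh '' Iᶜ) ∪ lift L '' OBS ∪ lift L '' SDgen ∪ lift L '' ⋃₀ MEAS =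
      lift L '' (beh '' Iᶜ ∪ (SDgen ∪ OBS ∪ ⋃₀ MEAS)) := by
    simp only [Set.image_union]
    ac_rfl
  have hmbd : (Set.range fun i => ((abOf L (c i)).not).imp (lift L (beh i))) ∪ lift L '' SDgen ∪
      ((fun i => abOf L (c i)) '' I) ∪ ((fun i => (abOf L (c i)).not) '' Iᶜ) ∪
      lift L '' OBS ∪ lift L '' ⋃₀ MEAS =
      sdBeh c beh ∪ abLiterals c I ∪ lift L '' (SDgen ∪ OBS ∪ ⋃₀ MEAS) := by
    simp only [sdBeh, abLiterals, Set.image_union]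
    ac_rfl
  rw [hkbd, hmbd]
  exact isSatisfiable_lift_iff_sdBeh_union hdist I

end Reduction

theorem statement4 {n : ℕ}
    (c : Fin n → L₀.Constants) (hc : Function.Injective c)
    (beh : Fin n → L₀.Sentence) (hbeh : Function.Injective beh)
    (SDgen OBS : Set L₀.Sentence)
    (MEAS : Set (Set L₀.Sentence))
    (hdist : ∀ i j : Fin n, i ≠ j →
      Theory.ModelsBoundedFormula (SDgen ∪ OBS ∪ ⋃₀ MEAS)
        ((Term.equal (Constants.term (c i)) (Constants.term (c j)) : L₀.Formula Empty).not)) :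
    (∀ I : Set (Fin n),
        Theory.IsSatisfiable
            ((lift L₀ '' (beh '' Iᶜ)) ∪ lift L₀ '' OBS ∪ lift L₀ '' SDgen ∪
              lift L₀ '' ⋃₀ MEAS)
          ↔
        Theory.IsSatisfiable
            ((Set.range fun i : Fin n => ((abOf L₀ (c i)).not).imp (lift L₀ (beh i))) ∪
              lift L₀ '' SDgen ∪
              ((fun i : Fin n => abOf L₀ (c i)) '' I) ∪
              ((fun i : Fin n => (abOf L₀ (c i)).not) '' Iᶜ) ∪
              lift L₀ '' OBS ∪ lift L₀ '' ⋃₀ MEAS)) ∧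
    Set.BijOn
      (fun D : Set ((LL L₀).Sentence) => c '' {i : Fin n | lift L₀ (beh i) ∈ D})
      {D : Set ((LL L₀).Sentence) |
        D ⊆ lift L₀ '' Set.range beh ∧
        Theory.IsSatisfiable
          ((lift L₀ '' Set.range beh \ D) ∪ lift L₀ '' OBS ∪ lift L₀ '' SDgen ∪
            lift L₀ '' ⋃₀ MEAS)}
      {Δ : Set L₀.Constants |
        Δ ⊆ Set.range c ∧
        Theory.IsSatisfiable
          ((Set.range fun i : Fin n => ((abOf L₀ (c i)).not).imp (lift L₀ (beh i))) ∪
            lift L₀ '' SDgen ∪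
            (abOf L₀ '' Δ) ∪
            ((fun t => (abOf L₀ t).not) '' (Set.range c \ Δ)) ∪
            lift L₀ '' OBS ∪ lift L₀ '' ⋃₀ MEAS)} := by
  refine ⟨isSatisfiable_kbd_iff_mbd hdist, ?_⟩
  convert Set.bijOn_image_preimage (lift_injective.comp hbeh) hc
    (fun I => Theory.IsSatisfiable (lift L₀ '' (beh '' Iᶜ) ∪ lift L₀ '' OBS ∪
      lift L₀ '' SDgen ∪ lift L₀ '' ⋃₀ MEAS)) using 1
  · rfl
  · ext D
    rw [Set.mem_ofPred_eq, Set.mem_ofPred_eq, ← Set.range_comp, ← Set.image_compl_preimage,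
      Set.image_comp]
  · ext Δ
    rw [Set.mem_ofPred_eq, Set.mem_ofPred_eq]
    refine and_congr_right fun hΔ => ?_
    have hab : abOf L₀ '' Δ = (fun i => abOf L₀ (c i)) '' (c ⁻¹' Δ) := by
      rw [← Set.image_image (abOf L₀) c, Set.image_preimage_eq_of_subset hΔ]
    have hnab : (fun t => (abOf L₀ t).not) '' (Set.range c \ Δ) =
        (fun i => (abOf L₀ (c i)).not) '' (c ⁻¹' Δ)ᶜ := by
      rw [← Set.image_compl_preimage, Set.image_image]
    rw [hab, hnab, isSatisfiable_kbd_iff_mbd hdist]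

end MBDReduction
end

section
/- Let ⟨K,B,P,N⟩_R be a DPI, D a set of minimal diagnoses w.r.t. it, and X ⊆ L any set of sentences. Then ⟨dx(X), dnx(X), dz(X)⟩ is a partition of D: the three sets are pairwise disjoint and their union equals D (in particular, dx(X) ∩ dnx(X) = ∅). -/
namespace KBDDiag

namespace DPI

variable {L : Type*} {d : DPI L}

theorem kstar_eq (D : Set L) : d.Kstar D = ((d.K \ D) ∪ d.UP) ∪ d.B := by
  simp only [Kstar, Set.union_right_comm]

theorem IsSolutionKB.not_violates_union_B {Ks : Set L} (h : d.IsSolutionKB Ks) :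
    ¬ d.Violates (Ks ∪ d.B) := by
  rintro (⟨r, hr, hnr⟩ | ⟨n, hn, hentn⟩)
  · exact hnr (h.1 r hr)
  · exact h.2.2 n hn hentn

theorem IsDiagnosis.not_violates_kstar {D : Set L} (h : d.IsDiagnosis D) :
    ¬ d.Violates (d.Kstar D) := by
  rw [kstar_eq]
  exact h.2.not_violates_union_B

/-- Requirements survive adding entailed sentences, and by idempotence `Y ∪ X` entails nothing
that `Y` does not. -/
theorem not_violates_union_of_entailsAll {Y X : Set L} (hY : ¬ d.Violates Y)
    (hX : d.EntailsAll Y X) : ¬ d.Violates (Y ∪ X) := by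
  rintro (⟨r, hr, hnr⟩ | ⟨n, hn, hentn⟩)
  · refine hnr (d.sat_entailed r hr Y X ?_ hX)
    by_contra hrY
    exact hY (Or.inl ⟨r, hr, hrY⟩)
  · exact hY (Or.inr ⟨n, hn, fun β hβ => d.entails_idem Y X β hX (hentn β hβ)⟩)

theorem dxS_inter_dnxS_eq_empty {Ds : Set (Set L)} (hDs : ∀ Di ∈ Ds, d.IsDiagnosis Di)
    (X : Set L) : d.dxS Ds X ∩ d.dnxS Ds X = ∅ :=
  Set.eq_empty_of_forall_notMem fun Di ⟨⟨hDi, hent⟩, ⟨_, hviol⟩⟩ =>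
    not_violates_union_of_entailsAll (hDs Di hDi).not_violates_kstar hent hviol

end DPI

/-- `⟨dx(X), dnx(X), dz(X)⟩` is a partition of the leading diagnoses `Ds`. -/
theorem statement5 {L : Type*} (d : DPI L) (Ds : Set (Set L))
    (hDs : ∀ Di ∈ Ds, d.IsMinDiagnosis Di) (X : Set L) :
    d.dxS Ds X ∩ d.dnxS Ds X = ∅ ∧
    d.dxS Ds X ∩ d.dzS Ds X = ∅ ∧
    d.dnxS Ds X ∩ d.dzS Ds X = ∅ ∧
    d.dxS Ds X ∪ d.dnxS Ds X ∪ d.dzS Ds X = Ds := by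
  have hcover : d.dxS Ds X ∪ d.dnxS Ds X ⊆ Ds :=
    Set.union_subset (Set.sep_subset _ _) (Set.sep_subset _ _)
  refine ⟨d.dxS_inter_dnxS_eq_empty (fun Di hDi => (hDs Di hDi).1) X, ?_, ?_,
    Set.union_sdiff_cancel hcover⟩ <;> rw [← Set.disjoint_iff_inter_eq_empty]
  exacts [Set.disjoint_sdiff_right.mono_left Set.subset_union_left,
    Set.disjoint_sdiff_right.mono_left Set.subset_union_right]

end KBDDiag
end

section
/- Let ⟨K,B,P,N⟩_R be a DPI, D a set of minimal diagnoses w.r.t. it, and Q a query w.r.t. D with Q ⊆ K. Then dz(Q) = ∅. -/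
namespace KBDDiag

/-!
If `Dᵢ ∉ dnx(Q)` then `Dᵢ \ Q` is again a diagnosis: since `Q ⊆ K`, its repaired KB together
with `B` is exactly `K*ᵢ ∪ Q`, which violates nothing and contains `U_P`. Minimality of `Dᵢ`
forces `Dᵢ ∩ Q = ∅`, so `Q ⊆ K \ Dᵢ ⊆ K*ᵢ` and `Dᵢ ∈ dx(Q)`.
-/

namespace DPI

variable {L : Type*} (d : DPI L)

theorem entailsAll_of_subset {X Y : Set L} (h : Y ⊆ X) : d.EntailsAll X Y :=
  fun α hα => d.entails_ext X α (h hα)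

theorem isSolutionKB_of_not_violates {Ks : Set L} (hUP : d.UP ⊆ Ks)
    (h : ¬ d.Violates (Ks ∪ d.B)) : d.IsSolutionKB Ks := by
  simp only [Violates, not_or, not_exists, not_and, not_not] at h
  refine ⟨h.1, fun p hp => d.entailsAll_of_subset ?_, h.2⟩
  exact (Set.subset_sUnion_of_mem hp).trans (hUP.trans Set.subset_union_left)

theorem diff_diff_union_eq_kstar_union {Di Q : Set L} (hQK : Q ⊆ d.K) :
    d.K \ (Di \ Q) ∪ d.UP ∪ d.B = d.Kstar Di ∪ Q := by
  ext x
  have := @hQK x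
  simp only [Kstar, Set.mem_union, Set.mem_sdiff]
  tauto

theorem isDiagnosis_diff {Di Q : Set L} (hDiK : Di ⊆ d.K) (hQK : Q ⊆ d.K)
    (h : ¬ d.Violates (d.Kstar Di ∪ Q)) : d.IsDiagnosis (Di \ Q) := by
  refine ⟨Set.sdiff_subset.trans hDiK, d.isSolutionKB_of_not_violates ?_ ?_⟩
  · exact Set.subset_union_right
  · rwa [d.diff_diff_union_eq_kstar_union hQK]

theorem IsMinDiagnosis.disjoint_of_not_violates {Di Q : Set L} (hDi : d.IsMinDiagnosis Di)
    (hQK : Q ⊆ d.K) (h : ¬ d.Violates (d.Kstar Di ∪ Q)) : Disjoint Di Q := by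
  by_contra hDQ
  refine hDi.2 (Di \ Q) ?_ (d.isDiagnosis_diff hDi.1.1 hQK h)
  exact Set.sdiff_ssubset_left_iff.mpr (Set.not_disjoint_iff_nonempty_inter.mp hDQ)

theorem entailsAll_kstar_of_disjoint {Di Q : Set L} (hQK : Q ⊆ d.K) (hDQ : Disjoint Di Q) :
    d.EntailsAll (d.Kstar Di) Q :=
  d.entailsAll_of_subset fun _ hα =>
    Or.inl (Or.inl ⟨hQK hα, Set.disjoint_right.mp hDQ hα⟩)

end DPI

theorem statement7_general {L : Type*} (d : DPI L) (Ds : Set (Set L))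
    (hDs : ∀ Di ∈ Ds, d.IsMinDiagnosis Di)
    (Q : Set L) (hQK : Q ⊆ d.K) :
    d.dzS Ds Q = ∅ := by
  refine Set.eq_empty_of_forall_notMem fun Di ⟨hDi, hnot⟩ => hnot ?_
  by_cases hviol : d.Violates (d.Kstar Di ∪ Q)
  · exact Or.inr ⟨hDi, hviol⟩
  · have hDQ := (hDs Di hDi).disjoint_of_not_violates d hQK hviol
    exact Or.inl ⟨hDi, d.entailsAll_kstar_of_disjoint hQK hDQ⟩

/-- For a query `Q ⊆ K` w.r.t. `Ds`, `dz(Q) = ∅`. -/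
theorem statement7 {L : Type*} (d : DPI L) (Ds : Set (Set L))
    (hDs : ∀ Di ∈ Ds, d.IsMinDiagnosis Di)
    (Q : Set L) (hQK : Q ⊆ d.K) (hQ : d.IsQuery Ds Q) :
    d.dzS Ds Q = ∅ :=
  statement7_general d Ds hDs Q hQK

end KBDDiag
end

section
/- Let ⟨K,B,P,N⟩_R be a DPI, D a set of minimal diagnoses w.r.t. it, and Q a query w.r.t. D with Q ⊆ K. Then: (i) Q ∩ U_D ≠ ∅; (ii) Q ∩ I_D = ∅ (this holds for every query w.r.t. D, not only those contained in K); and (iii) Q' := Q \ (K \ U_D) is again a query w.r.t. D with the same q-partition as Q, i.e., ⟨dx(Q'), dnx(Q'), dz(Q')⟩ = ⟨dx(Q), dnx(Q), dz(Q)⟩. -/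
/-!
A sentence of `Q` lying in `K` but in no leading diagnosis belongs to every `K*_i`, so removing it
changes neither `K*_i ⊨ Q` nor `K*_i ∪ Q`; hence `Q \ (K \ U_D)` has the q-partition of `Q`, and it
is nonempty because `K*_i` alone violates nothing. If `Q` were to share a sentence `α` with `I_D`,
then for `D_i ∈ dx(Q)` the KB `K*_i` already entails `α`, so `D_i \ {α}` would still be a diagnosis,
against the minimality of `D_i`.
-/

namespace KBDDiag

namespace DPI

variable {L : Type*} (d : DPI L)

lemma entails_union_iff {X A : Set L} (hA : d.EntailsAll X A) {β : L} :
    d.entails (X ∪ A) β ↔ d.entails X β :=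
  ⟨d.entails_idem X A β hA, d.entails_mono X A β⟩

lemma violates_union_iff {X A : Set L} (hA : d.EntailsAll X A) :
    d.Violates (X ∪ A) ↔ d.Violates X := by
  refine or_congr ⟨?_, ?_⟩ ⟨?_, ?_⟩
  · exact fun ⟨r, hr, hXA⟩ => ⟨r, hr, fun hX => hXA (d.sat_entailed r hr X A hX hA)⟩
  · exact fun ⟨r, hr, hX⟩ => ⟨r, hr, d.viol_mono r hr X (X ∪ A) Set.subset_union_left hX⟩
  · exact fun ⟨n, hn, h⟩ => ⟨n, hn, fun β hβ => (d.entails_union_iff hA).mp (h β hβ)⟩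
  · exact fun ⟨n, hn, h⟩ => ⟨n, hn, fun β hβ => (d.entails_union_iff hA).mpr (h β hβ)⟩

lemma entailsAll_sdiff_iff {X A : Set L} (hA : A ⊆ X) (Q : Set L) :
    d.EntailsAll X (Q \ A) ↔ d.EntailsAll X Q := by
  refine ⟨fun h α hα => ?_, fun h α hα => h α hα.1⟩
  by_cases hαA : α ∈ A
  · exact d.entails_ext X α (hA hαA)
  · exact h α ⟨hα, hαA⟩

lemma isSolutionKB_iff (X : Set L) :
    d.IsSolutionKB X ↔ ¬ d.Violates (X ∪ d.B) ∧ ∀ p ∈ d.P, d.EntailsAll (X ∪ d.B) p := by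
  simp only [IsSolutionKB, Violates, not_or, not_exists, not_and, not_not]
  tauto

lemma isDiagnosis_iff_s9 (D : Set L) :
    d.IsDiagnosis D ↔
      D ⊆ d.K ∧ ¬ d.Violates (d.Kstar D) ∧ ∀ p ∈ d.P, d.EntailsAll (d.Kstar D) p := by
  rw [IsDiagnosis, isSolutionKB_iff, Kstar, Set.union_right_comm]

lemma Kstar_sdiff {D A : Set L} (hDK : D ⊆ d.K) (hAD : A ⊆ D) :
    d.Kstar (D \ A) = d.Kstar D ∪ A := by
  ext x
  have := @hDK x
  have := @hAD x
  simp only [Kstar, Set.mem_union, Set.mem_sdiff]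
  tauto

lemma sdiff_sUnion_subset_Kstar {Ds : Set (Set L)} {D : Set L} (hD : D ∈ Ds) :
    d.K \ ⋃₀ Ds ⊆ d.Kstar D := fun _ hα =>
  Or.inl (Or.inl ⟨hα.1, fun hαD => hα.2 ⟨D, hD, hαD⟩⟩)

variable {d}

lemma IsDiagnosis.not_violates_Kstar {D : Set L} (hD : d.IsDiagnosis D) :
    ¬ d.Violates (d.Kstar D) :=
  ((d.isDiagnosis_iff_s9 D).mp hD).2.1

lemma IsDiagnosis.sdiff {D A : Set L} (hD : d.IsDiagnosis D) (hAD : A ⊆ D)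
    (hA : d.EntailsAll (d.Kstar D) A) : d.IsDiagnosis (D \ A) := by
  obtain ⟨hDK, hviol, hP⟩ := (d.isDiagnosis_iff_s9 D).mp hD
  refine (d.isDiagnosis_iff_s9 _).mpr ⟨Set.sdiff_subset.trans hDK, ?_, fun p hp β hβ => ?_⟩
  · rwa [d.Kstar_sdiff hDK hAD, d.violates_union_iff hA]
  · rw [d.Kstar_sdiff hDK hAD]
    exact d.entails_mono _ A β (hP p hp β hβ)

lemma IsMinDiagnosis.inter_eq_empty {D X : Set L} (hD : d.IsMinDiagnosis D)
    (hX : d.EntailsAll (d.Kstar D) X) : X ∩ D = ∅ := by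
  by_contra hne
  obtain ⟨α, hαX, hαD⟩ := Set.nonempty_iff_ne_empty.mpr hne
  have hsub : D \ (X ∩ D) ⊂ D := Set.sdiff_ssubset_left_iff.mpr ⟨α, hαD, hαX, hαD⟩
  exact hD.2 _ hsub (hD.1.sdiff Set.inter_subset_right fun β hβ => hX β hβ.1)

lemma IsQuery.inter_sInter_eq_empty {Ds : Set (Set L)} (hDs : ∀ D ∈ Ds, d.IsMinDiagnosis D)
    {Q : Set L} (hQ : d.IsQuery Ds Q) : Q ∩ ⋂₀ Ds = ∅ := by
  obtain ⟨D, hD, hQD⟩ := hQ.2.1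
  exact Set.subset_eq_empty (Set.inter_subset_inter_right Q (Set.sInter_subset_of_mem hD))
    ((hDs D hD).inter_eq_empty hQD)

variable (d)

section SdiffOfSubsetKstar

variable {Ds : Set (Set L)} {A : Set L}

lemma dxS_sdiff (hA : ∀ D ∈ Ds, A ⊆ d.Kstar D) (Q : Set L) :
    d.dxS Ds (Q \ A) = d.dxS Ds Q := by
  ext D
  exact and_congr_right fun hD => d.entailsAll_sdiff_iff (hA D hD) Q

lemma dnxS_sdiff (hA : ∀ D ∈ Ds, A ⊆ d.Kstar D) (Q : Set L) :
    d.dnxS Ds (Q \ A) = d.dnxS Ds Q := by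
  ext D
  refine and_congr_right fun hD => ?_
  have hAD := @hA D hD
  rw [show d.Kstar D ∪ Q \ A = d.Kstar D ∪ Q by
    ext; simp only [Set.mem_union, Set.mem_sdiff]; tauto]

lemma dzS_sdiff (hA : ∀ D ∈ Ds, A ⊆ d.Kstar D) (Q : Set L) :
    d.dzS Ds (Q \ A) = d.dzS Ds Q := by
  rw [dzS, dzS, d.dxS_sdiff hA, d.dnxS_sdiff hA]

end SdiffOfSubsetKstar

lemma dnxS_empty {Ds : Set (Set L)} (hDs : ∀ D ∈ Ds, d.IsDiagnosis D) : d.dnxS Ds ∅ = ∅ :=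
  Set.eq_empty_of_forall_notMem fun D ⟨hD, hviol⟩ =>
    (hDs D hD).not_violates_Kstar (by rwa [Set.union_empty] at hviol)

end DPI

/-- For a query `Q ⊆ K` w.r.t. `Ds`: (i) `Q ∩ U_D ≠ ∅`;
(ii) every query `Q'` w.r.t. `Ds` satisfies `Q' ∩ I_D = ∅`; and
(iii) `Q \ (K \ U_D)` is again a query with the same q-partition as `Q`. -/
theorem statement9 {L : Type*} (d : DPI L) (Ds : Set (Set L))
    (hDs : ∀ Di ∈ Ds, d.IsMinDiagnosis Di)
    (Q : Set L) (hQK : Q ⊆ d.K) (hQ : d.IsQuery Ds Q) :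
    (Q ∩ ⋃₀ Ds).Nonempty ∧
    (∀ Q' : Set L, d.IsQuery Ds Q' → Q' ∩ ⋂₀ Ds = ∅) ∧
    (d.IsQuery Ds (Q \ (d.K \ ⋃₀ Ds)) ∧
     d.dxS Ds (Q \ (d.K \ ⋃₀ Ds)) = d.dxS Ds Q ∧
     d.dnxS Ds (Q \ (d.K \ ⋃₀ Ds)) = d.dnxS Ds Q ∧
     d.dzS Ds (Q \ (d.K \ ⋃₀ Ds)) = d.dzS Ds Q) := by
  have hA : ∀ D ∈ Ds, d.K \ ⋃₀ Ds ⊆ d.Kstar D := fun _ => d.sdiff_sUnion_subset_Kstar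
  have hdx := d.dxS_sdiff hA Q
  have hdnx := d.dnxS_sdiff hA Q
  have hne : (Q \ (d.K \ ⋃₀ Ds)).Nonempty := by
    by_contra! h
    have hdnxQ := hQ.2.2
    rw [← hdnx, h, d.dnxS_empty fun D hD => (hDs D hD).1] at hdnxQ
    exact Set.not_nonempty_empty hdnxQ
  have hsub : Q \ (d.K \ ⋃₀ Ds) ⊆ Q ∩ ⋃₀ Ds := fun α hα =>
    ⟨hα.1, of_not_not fun hαU => hα.2 ⟨hQK hα.1, hαU⟩⟩
  exact ⟨hne.mono hsub, fun Q' hQ' => hQ'.inter_sInter_eq_empty hDs,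
    ⟨hne, hdx ▸ hQ.2.1, hdnx ▸ hQ.2.2⟩, hdx, hdnx, d.dzS_sdiff hA Q⟩

end KBDDiag
end

section
/- Let ⟨K,B,P,N⟩_R be a DPI, D a set of minimal diagnoses w.r.t. it, and P a canonical q-partition w.r.t. D. Then there is exactly one canonical query whose q-partition equals P, namely Q_can(dx(P)): if S_1, S_2 are seeds with ∅ ⊂ S_1, S_2 ⊂ D such that Q_can(S_1) and Q_can(S_2) are defined and both have q-partition P, then Q_can(S_1) = Q_can(S_2) = Q_can(dx(P)). -/
namespace KBDDiag

/-! A sentence `α` of a minimal diagnosis `Dᵢ` is never entailed by `K*ᵢ`: otherwise `K*ᵢ ∪ {α}`,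
the `K*` of `Dᵢ \ {α}`, would still be a solution KB, so `Dᵢ \ {α}` would be a smaller diagnosis.
Hence `Q_can(S)` is disjoint from every diagnosis in `dx(Q_can(S))`, while `S ⊆ dx(Q_can(S))` by
extensivity; together `Q_can(S) = Q_can(dx(Q_can(S)))`, so a canonical query is determined by the
first component of its q-partition. -/

namespace DPI

variable {L : Type*} (d : DPI L)

theorem Kstar_eq (Di : Set L) : d.Kstar Di = (d.K \ Di ∪ d.UP) ∪ d.B :=
  Set.union_right_comm _ _ _

variable {d}

theorem IsSolutionKB.union_of_entailsAll {Ks A : Set L} (h : d.IsSolutionKB Ks)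
    (hA : d.EntailsAll (Ks ∪ d.B) A) : d.IsSolutionKB (Ks ∪ A) := by
  obtain ⟨hR, hP, hN⟩ := h
  have hcomm : Ks ∪ A ∪ d.B = Ks ∪ d.B ∪ A := Set.union_right_comm _ _ _
  refine ⟨fun r hr => ?_, fun p hp α hα => ?_, fun n hn hent => ?_⟩
  · rw [hcomm]
    exact d.sat_entailed r hr _ A (hR r hr) hA
  · rw [hcomm]
    exact d.entails_mono _ A α (hP p hp α hα)
  · rw [hcomm] at hent
    exact hN n hn fun β hβ => d.entails_idem _ A β hA (hent β hβ)

theorem IsDiagnosis.sdiff_singleton {D : Set L} {α : L} (hD : d.IsDiagnosis D) (hα : α ∈ D)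
    (hent : d.entails (d.Kstar D) α) : d.IsDiagnosis (D \ {α}) := by
  have hK : d.K \ (D \ {α}) ∪ d.UP = (d.K \ D ∪ d.UP) ∪ {α} := by
    rw [Set.sdiff_sdiff_right, Set.inter_singleton_of_mem (hD.1 hα), Set.union_right_comm]
  refine ⟨Set.sdiff_subset.trans hD.1, hK ▸ hD.2.union_of_entailsAll ?_⟩
  rintro β rfl
  rwa [← Kstar_eq]

theorem IsMinDiagnosis.not_entails_Kstar {Di : Set L} (hDi : d.IsMinDiagnosis Di) {α : L}
    (hα : α ∈ Di) : ¬ d.entails (d.Kstar Di) α := fun hent =>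
  hDi.2 _ (Set.sdiff_singleton_ssubset.mpr hα) (hDi.1.sdiff_singleton hα hent)

variable {Ds S : Set (Set L)}

theorem Qcan_anti {T : Set (Set L)} (h : S ⊆ T) : d.Qcan Ds T ⊆ d.Qcan Ds S :=
  Set.inter_subset_inter_left _ (Set.sdiff_subset_sdiff_right (Set.sUnion_mono h))

theorem subset_dxS_Qcan (hS : S ⊆ Ds) : S ⊆ d.dxS Ds (d.Qcan Ds S) := by
  refine fun Di hDi => ⟨hS hDi, fun α ⟨⟨hαK, hαS⟩, _⟩ => d.entails_ext _ α ?_⟩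
  exact Or.inl (Or.inl ⟨hαK, fun hαDi => hαS ⟨Di, hDi, hαDi⟩⟩)

theorem Qcan_dxS_Qcan (hDs : ∀ Di ∈ Ds, d.IsMinDiagnosis Di) (hS : S ⊆ Ds) :
    d.Qcan Ds (d.dxS Ds (d.Qcan Ds S)) = d.Qcan Ds S := by
  refine (Qcan_anti (subset_dxS_Qcan hS)).antisymm fun α hα => ⟨⟨hα.1.1, ?_⟩, hα.2⟩
  rintro ⟨Di, ⟨hDi, hent⟩, hαDi⟩
  exact (hDs Di hDi).not_entails_Kstar hαDi (hent α hα)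

end DPI

theorem statement11_general {L : Type*} (d : DPI L) (Ds : Set (Set L))
    (hDs : ∀ Di ∈ Ds, d.IsMinDiagnosis Di)
    (dxp dnxp : Set (Set L))
    (S1 S2 : Set (Set L))
    (hS1ss : S1 ⊂ Ds)
    (hS1qp : d.dxS Ds (d.Qcan Ds S1) = dxp ∧ d.dnxS Ds (d.Qcan Ds S1) = dnxp ∧
      d.dzS Ds (d.Qcan Ds S1) = ∅)
    (hS2ss : S2 ⊂ Ds)
    (hS2qp : d.dxS Ds (d.Qcan Ds S2) = dxp ∧ d.dnxS Ds (d.Qcan Ds S2) = dnxp ∧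
      d.dzS Ds (d.Qcan Ds S2) = ∅) :
    d.Qcan Ds S1 = d.Qcan Ds dxp ∧ d.Qcan Ds S2 = d.Qcan Ds dxp := by
  constructor
  · rw [← hS1qp.1, DPI.Qcan_dxS_Qcan hDs hS1ss.subset]
  · rw [← hS2qp.1, DPI.Qcan_dxS_Qcan hDs hS2ss.subset]

/-- For a canonical q-partition `P = ⟨dxp, dnxp, ∅⟩`, the canonical query
with q-partition `P` is unique and equals `Q_can(dxp)`. -/
theorem statement11 {L : Type*} (d : DPI L) (Ds : Set (Set L))
    (hDs : ∀ Di ∈ Ds, d.IsMinDiagnosis Di)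
    (dxp dnxp : Set (Set L)) (hP : d.IsCanonicalQPartition Ds dxp dnxp)
    (S1 S2 : Set (Set L))
    (hS1ne : S1.Nonempty) (hS1ss : S1 ⊂ Ds) (hS1def : (d.Qcan Ds S1).Nonempty)
    (hS1qp : d.dxS Ds (d.Qcan Ds S1) = dxp ∧ d.dnxS Ds (d.Qcan Ds S1) = dnxp ∧
      d.dzS Ds (d.Qcan Ds S1) = ∅)
    (hS2ne : S2.Nonempty) (hS2ss : S2 ⊂ Ds) (hS2def : (d.Qcan Ds S2).Nonempty)
    (hS2qp : d.dxS Ds (d.Qcan Ds S2) = dxp ∧ d.dnxS Ds (d.Qcan Ds S2) = dnxp ∧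
      d.dzS Ds (d.Qcan Ds S2) = ∅) :
    d.Qcan Ds S1 = d.Qcan Ds dxp ∧ d.Qcan Ds S2 = d.Qcan Ds dxp :=
  statement11_general d Ds hDs dxp dnxp S1 S2 hS1ss hS1qp hS2ss hS2qp

end KBDDiag
end
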